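/- arXiv:1611.09001 — 6 statements merged into one kernel-verified Lean document; each statement's English description precedes it below -/
import Mathlib

section
/- Let r ≥ 2 be an integer and define ε_r : ℝ → ℝ by ε_r(α) = sin²α · cos^{2(r−1)}α. If α ∈ (0, π) and cos α ≠ 0, then α is a critical point of ε_r (i.e. the derivative of ε_r vanishes at α) if and only if sin²α = 1/r. -/
open Real

theorem stmt_0 (r : ℕ) (hr : 2 ≤ r)
    (ε : ℝ → ℝ) (hε : ∀ α, ε α = sin α ^ 2 * cos α ^ (2 * (r - 1)))
    (α : ℝ) (hα : α ∈ Set.Ioo 0 π) (hcos : cos α ≠ 0) :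
    deriv ε α = 0 ↔ sin α ^ 2 = 1 / r := by
  obtain ⟨k, rfl⟩ : ∃ k, r = k + 2 := ⟨r - 2, by omega⟩
  have hεf : ε = fun α => sin α ^ 2 * cos α ^ (2 * k + 2) := by
    funext x; rw [hε, show 2 * (k + 2 - 1) = 2 * k + 2 from by omega]
  have hs : sin α ≠ 0 := ne_of_gt (sin_pos_of_pos_of_lt_pi hα.1 hα.2)
  have hc : cos α ^ (2 * k + 1) ≠ 0 := pow_ne_zero _ hcos
  have h1 : HasDerivAt (fun x => sin x ^ 2 * cos x ^ (2 * k + 2))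
      ((2 * sin α ^ 1 * cos α) * cos α ^ (2 * k + 2)
        + sin α ^ 2 * ((2 * k + 2 : ℕ) * cos α ^ (2 * k + 1) * (-sin α))) α := by
    have := (((Real.hasDerivAt_sin α).pow 2).mul ((Real.hasDerivAt_cos α).pow (2 * k + 2)))
    refine this.congr_deriv ?_
    rw [show 2 * k + 2 - 1 = 2 * k + 1 by omega]
    simp only [Pi.pow_apply]
    push_cast
    ring
  have hderiv : deriv ε α =
      sin α * cos α ^ (2 * k + 1) * (2 * cos α ^ 2 - (2 * k + 2) * sin α ^ 2) := by
    rw [hεf, h1.deriv]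
    push_cast
    ring
  rw [hderiv, mul_eq_zero, mul_eq_zero]
  have hcs : cos α ^ 2 = 1 - sin α ^ 2 := cos_sq' α
  have hk : ((k : ℝ) + 2) ≠ 0 := by positivity
  constructor
  · rintro ((h | h) | h)
    · exact absurd h hs
    · exact absurd h hc
    · rw [hcs] at h
      push_cast
      field_simp
      nlinarith
  · intro h
    right
    rw [hcs]
    push_cast at h
    field_simp at h
    nlinarith
end

section
/- Let r ≥ 2 be an integer and define ε_r : ℝ → ℝ by ε_r(α) = sin²α · cos^{2(r−1)}α. If α ∈ (0, π), cos α ≠ 0 and sin²α = 1/r, then the second derivative of ε_r at α is strictly negative. -/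
/-! At a point with `sin² α = 1 / r` we have `cos² α = (r - 1) sin² α`, and substituting this
into the second derivative `cos^(2r-4) (2 cos⁴ - (10r - 8) sin² cos² + 2(r-1)(2r-3) sin⁴)`
of `ε_r` collapses it to `-4 cos^(2(r-1)) α`, which is negative as soon as `cos α ≠ 0`. -/

open Real

theorem hasDerivAt_sin_pow_mul_cos_pow (a b : ℕ) (x : ℝ) :
    HasDerivAt (fun x => sin x ^ (a + 1) * cos x ^ (b + 1))
      ((a + 1) * sin x ^ a * cos x ^ (b + 2) - (b + 1) * sin x ^ (a + 2) * cos x ^ b) x := by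
  refine (((hasDerivAt_sin x).fun_pow (a + 1)).fun_mul
    ((hasDerivAt_cos x).fun_pow (b + 1))).congr_deriv ?_
  rw [Nat.add_sub_cancel, Nat.add_sub_cancel]
  push_cast
  ring

theorem deriv_sin_sq_mul_cos_pow (b : ℕ) :
    deriv (fun x => sin x ^ 2 * cos x ^ (b + 2)) =
      fun x => 2 * (sin x ^ 1 * cos x ^ (b + 3)) - (b + 2) * (sin x ^ 3 * cos x ^ (b + 1)) := by
  funext x
  rw [(hasDerivAt_sin_pow_mul_cos_pow 1 (b + 1) x).deriv]
  push_cast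
  ring

theorem deriv_deriv_sin_sq_mul_cos_pow (b : ℕ) (x : ℝ) :
    deriv (deriv fun x => sin x ^ 2 * cos x ^ (b + 2)) x =
      cos x ^ b * (2 * cos x ^ 4 - (5 * b + 12) * sin x ^ 2 * cos x ^ 2
        + (b + 2) * (b + 1) * sin x ^ 4) := by
  have h : HasDerivAt (fun x => 2 * (sin x ^ 1 * cos x ^ (b + 3))
      - ((b : ℝ) + 2) * (sin x ^ 3 * cos x ^ (b + 1))) _ x :=
    ((hasDerivAt_sin_pow_mul_cos_pow 0 (b + 2) x).const_mul 2).sub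
      ((hasDerivAt_sin_pow_mul_cos_pow 2 b x).const_mul _)
  rw [deriv_sin_sq_mul_cos_pow, h.deriv]
  push_cast
  ring

theorem deriv_deriv_sin_sq_mul_cos_pow_of_sin_sq_eq (k : ℕ) {x : ℝ}
    (hx : sin x ^ 2 = 1 / (k + 2)) :
    deriv (deriv fun x => sin x ^ 2 * cos x ^ (2 * k + 2)) x = -4 * cos x ^ (2 * k + 2) := by
  have hsin : sin x ^ 2 * (k + 2) = 1 := by
    rw [hx]
    field_simp
  have hcos : cos x ^ 2 = (k + 1) * sin x ^ 2 := by
    linear_combination sin_sq_add_cos_sq x - hsin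
  rw [deriv_deriv_sin_sq_mul_cos_pow, pow_add, pow_mul, show cos x ^ 4 = (cos x ^ 2) ^ 2 by ring,
    hcos]
  push_cast
  linear_combination (-4 * ((k + 1) * sin x ^ 2) ^ k * (k + 1) * sin x ^ 2) * hsin

theorem stmt_3_general (r : ℕ) (hr : 2 ≤ r)
    (ε : ℝ → ℝ) (hε : ∀ α, ε α = sin α ^ 2 * cos α ^ (2 * (r - 1)))
    (α : ℝ) (hcos : cos α ≠ 0)
    (hcrit : sin α ^ 2 = 1 / r) :
    deriv (deriv ε) α < 0 := by
  obtain ⟨k, rfl⟩ : ∃ k, r = k + 2 := ⟨r - 2, by omega⟩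
  have hε' : ε = fun x => sin x ^ 2 * cos x ^ (2 * k + 2) := by
    funext x
    rw [hε, show 2 * (k + 2 - 1) = 2 * k + 2 by omega]
  have hsin : sin α ^ 2 = 1 / (k + 2) := by exact_mod_cast hcrit
  rw [hε', deriv_deriv_sin_sq_mul_cos_pow_of_sin_sq_eq k hsin]
  have : 0 < cos α ^ (2 * k + 2) := Even.pow_pos ⟨k + 1, by ring⟩ hcos
  linarith

theorem stmt_3 (r : ℕ) (hr : 2 ≤ r)
    (ε : ℝ → ℝ) (hε : ∀ α, ε α = sin α ^ 2 * cos α ^ (2 * (r - 1)))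
    (α : ℝ) (hα : α ∈ Set.Ioo 0 π) (hcos : cos α ≠ 0)
    (hcrit : sin α ^ 2 = 1 / r) :
    deriv (deriv ε) α < 0 :=
  stmt_3_general r hr ε hε α hcos hcrit
end

section
/- Let r ≥ 2 be an integer and define ε_r : ℝ → ℝ by ε_r(α) = sin²α · cos^{2(r−1)}α. For every real number R with 0 < R < 1, there exists α ∈ (0, π) with sin α = R, cos α ≠ 0 and the derivative of ε_r vanishing at α, if and only if R = 1/√r. -/
/-!
Multiplying `ε_r'(α)` by `cos α` and using `cos² = 1 - sin²` gives
`2 sin α cos^{2(r-1)} α (1 - r sin² α)`, so where neither `sin` nor `cos` vanishes the critical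
points of `ε_r` are exactly the `α` with `r sin² α = 1`. For the converse take `α = arcsin R`.
-/

open Real

lemma eq_one_div_sqrt_iff {x R : ℝ} (hR : 0 < R) : R = 1 / √x ↔ x * R ^ 2 = 1 := by
  rw [one_div, ← sqrt_inv, eq_comm, sqrt_eq_iff_mul_self_eq_of_pos hR]
  rcases eq_or_ne x 0 with rfl | hx
  · simp [hR.ne']
  · rw [← mul_eq_one_iff_eq_inv₀ hx]
    ring_nf

lemma hasDerivAt_sin_sq_mul_cos_pow (n : ℕ) (α : ℝ) :
    HasDerivAt (fun α => sin α ^ 2 * cos α ^ n)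
      (2 * sin α * cos α * cos α ^ n - n * sin α ^ 3 * cos α ^ (n - 1)) α := by
  refine (((hasDerivAt_sin α).fun_pow 2).fun_mul ((hasDerivAt_cos α).fun_pow n)).congr_deriv ?_
  push_cast
  ring

lemma deriv_sin_sq_mul_cos_pow_eq_zero_iff (m : ℕ) {α : ℝ} (hs : sin α ≠ 0) (hc : cos α ≠ 0) :
    deriv (fun α => sin α ^ 2 * cos α ^ (2 * m)) α = 0 ↔ (m + 1) * sin α ^ 2 = 1 := by
  have hcos_mul_deriv : cos α * deriv (fun α => sin α ^ 2 * cos α ^ (2 * m)) α =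
      2 * sin α * cos α ^ (2 * m) * (1 - (m + 1) * sin α ^ 2) := by
    rw [(hasDerivAt_sin_sq_mul_cos_pow (2 * m) α).deriv]
    rcases m with _ | m
    · simp only [mul_zero, pow_zero, CharP.cast_eq_zero, zero_mul, sub_zero, zero_add, one_mul]
      linear_combination 2 * sin α * sin_sq_add_cos_sq α
    · rw [show 2 * (m + 1) - 1 = 2 * m + 1 by omega]
      push_cast
      linear_combination 2 * sin α * cos α ^ (2 * (m + 1)) * sin_sq_add_cos_sq α
  have hfactor : 2 * sin α * cos α ^ (2 * m) ≠ 0 := by positivity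
  rw [← mul_right_inj' hc, hcos_mul_deriv, mul_zero, mul_eq_zero_iff_left hfactor, sub_eq_zero,
    eq_comm]

theorem stmt_4 (r : ℕ) (hr : 2 ≤ r)
    (ε : ℝ → ℝ) (hε : ∀ α, ε α = sin α ^ 2 * cos α ^ (2 * (r - 1)))
    (R : ℝ) (hR : 0 < R ∧ R < 1) :
    (∃ α ∈ Set.Ioo 0 π, sin α = R ∧ cos α ≠ 0 ∧ deriv ε α = 0) ↔
      R = 1 / Real.sqrt r := by
  obtain ⟨hR0, hR1⟩ := hR
  have hr_cast : ((r - 1 : ℕ) + 1 : ℝ) = r := by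
    rw [Nat.cast_sub (by omega), Nat.cast_one, sub_add_cancel]
  have hε_fun : ε = fun α => sin α ^ 2 * cos α ^ (2 * (r - 1)) := funext hε
  rw [eq_one_div_sqrt_iff hR0]
  constructor
  · rintro ⟨α, -, rfl, hc, hcrit⟩
    rwa [hε_fun, deriv_sin_sq_mul_cos_pow_eq_zero_iff _ hR0.ne' hc, hr_cast] at hcrit
  · intro hcrit
    have hsin : sin (arcsin R) = R := sin_arcsin (by linarith) hR1.le
    have hcos : 0 < cos (arcsin R) := by
      rw [cos_arcsin]
      exact sqrt_pos.2 (by nlinarith)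
    have hsin_ne : sin (arcsin R) ≠ 0 := by rw [hsin]; exact hR0.ne'
    refine ⟨arcsin R, ⟨arcsin_pos.2 hR0, ?_⟩, hsin, hcos.ne', ?_⟩
    · linarith [arcsin_lt_pi_div_two.2 hR1, pi_pos]
    · rwa [hε_fun, deriv_sin_sq_mul_cos_pow_eq_zero_iff _ hsin_ne hcos.ne', hsin, hr_cast]
end

section
/- Let r and p be integers with 2 ≤ r ≤ 4 and p ≥ 1, and let q = p. If t ∈ (0,1) is a root of the polynomial P(t) = r(p+q)t³ + (q − p − r(q+2p))t² + (2+r)p·t − p, then t = 1/2. -/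
/-! For `q = p` the cubic factors as `p (2t - 1) (r t² - r t + 1)`, and for `0 ≤ r ≤ 4` the
quadratic factor `r (t - 1/2)² + (1 - r/4)` can only vanish at `t = 1/2`. -/

theorem eq_one_half_of_mul_sq_sub_mul_add_one_eq_zero {r t : ℝ} (hr₀ : 0 ≤ r) (hr₄ : r ≤ 4)
    (h : r * t ^ 2 - r * t + 1 = 0) : t = 1 / 2 := by
  have hr : 0 < r := hr₀.lt_of_ne (by rintro rfl; norm_num at h)
  have hsq : r * (t - 1 / 2) ^ 2 = r / 4 - 1 := by linear_combination h
  have hzero : (t - 1 / 2) ^ 2 = 0 :=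
    le_antisymm (nonpos_of_mul_nonpos_right (by linarith) hr) (sq_nonneg _)
  linarith [pow_eq_zero_iff (n := 2) two_ne_zero |>.mp hzero]

theorem stmt_6_general (r p q : ℕ) (hr' : r ≤ 4) (hp : 1 ≤ p) (hq : q = p)
    (t : ℝ)
    (hroot : (r : ℝ) * (p + q) * t ^ 3 + ((q : ℝ) - p - r * (q + 2 * p)) * t ^ 2
        + (2 + r) * p * t - p = 0) :
    t = 1 / 2 := by
  subst hq
  have hq₀ : (q : ℝ) ≠ 0 := Nat.cast_ne_zero.2 (by omega)
  have hfactor : (q : ℝ) * ((2 * t - 1) * (r * t ^ 2 - r * t + 1)) = 0 := by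
    linear_combination hroot
  rcases mul_eq_zero.1 ((mul_eq_zero.1 hfactor).resolve_left hq₀) with hlin | hquad
  · linarith
  · exact eq_one_half_of_mul_sq_sub_mul_add_one_eq_zero (Nat.cast_nonneg r)
      (by exact_mod_cast hr') hquad

theorem stmt_6 (r p q : ℕ) (hr : 2 ≤ r) (hr' : r ≤ 4) (hp : 1 ≤ p) (hq : q = p)
    (t : ℝ) (ht : t ∈ Set.Ioo (0 : ℝ) 1)
    (hroot : (r : ℝ) * (p + q) * t ^ 3 + ((q : ℝ) - p - r * (q + 2 * p)) * t ^ 2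
        + (2 + r) * p * t - p = 0) :
    t = 1 / 2 :=
  stmt_6_general r p q hr' hp hq t hroot
end

section
/- Let r ≥ 5 and p ≥ 1 be integers, and let q = p. Then the set of roots in (0,1) of the polynomial P(t) = r(p+q)t³ + (q − p − r(q+2p))t² + (2+r)p·t − p is exactly the three-element set {1/2, 1/2 − (1/2)√((r−4)/r), 1/2 + (1/2)√((r−4)/r)}; in particular the numbers 1/2 ± (1/2)√((r−4)/r) lie in (0,1), are roots of P, and are distinct from each other and from 1/2. -/
/-!
With `q = p` the cubic factors as `p (2t - 1) (r t² - r t + 1)`, and the quadratic factor has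
discriminant `r (r - 4)`, so its roots are `1/2 ± (1/2) √((r - 4)/r)`. Since `0 < √((r - 4)/r) < 1`
for `r > 4`, the three roots are distinct and all lie in `(0, 1)`.
-/

open Real Set

lemma cubic_eq_mul_two_mul_sub_one_mul {R : Type*} [CommRing R] (r p t : R) :
    r * (p + p) * t ^ 3 + (p - p - r * (p + 2 * p)) * t ^ 2 + (2 + r) * p * t - p
      = p * ((2 * t - 1) * (r * t ^ 2 - r * t + 1)) := by
  ring

section sqrtSubFourDiv

variable {r : ℝ}

lemma mul_sqrt_sub_four_div_sq (hr : 4 ≤ r) : r * √((r - 4) / r) ^ 2 = r - 4 := by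
  rw [sq_sqrt (div_nonneg (by linarith) (by linarith))]
  field_simp [show r ≠ 0 by linarith]

lemma sqrt_sub_four_div_pos (hr : 4 < r) : 0 < √((r - 4) / r) :=
  sqrt_pos.mpr (div_pos (by linarith) (by linarith))

lemma sqrt_sub_four_div_lt_one (hr : 0 < r) : √((r - 4) / r) < 1 :=
  (sqrt_lt' one_pos).mpr (by rw [one_pow, div_lt_one hr]; linarith)

lemma mul_sq_sub_mul_add_one_eq_zero_iff (hr : 4 ≤ r) (t : ℝ) :
    r * t ^ 2 - r * t + 1 = 0 ↔
      t = 1 / 2 - 1 / 2 * √((r - 4) / r) ∨ t = 1 / 2 + 1 / 2 * √((r - 4) / r) := by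
  have hs := mul_sqrt_sub_four_div_sq hr
  have hfac : r * t ^ 2 - r * t + 1
      = r * ((t - (1 / 2 - 1 / 2 * √((r - 4) / r))) * (t - (1 / 2 + 1 / 2 * √((r - 4) / r)))) := by
    linear_combination (1 / 4 : ℝ) * hs
  rw [hfac, mul_eq_zero, mul_eq_zero, sub_eq_zero, sub_eq_zero]
  simp [show r ≠ 0 by linarith]

end sqrtSubFourDiv

theorem setOf_mem_Ioo_cubic_eq_zero {r p : ℝ} (hr : 4 ≤ r) (hp : p ≠ 0) :
    {t : ℝ | t ∈ Ioo 0 1 ∧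
        r * (p + p) * t ^ 3 + (p - p - r * (p + 2 * p)) * t ^ 2 + (2 + r) * p * t - p = 0}
      = {1 / 2, 1 / 2 - 1 / 2 * √((r - 4) / r), 1 / 2 + 1 / 2 * √((r - 4) / r)} := by
  have hs0 : 0 ≤ √((r - 4) / r) := sqrt_nonneg _
  have hs1 := sqrt_sub_four_div_lt_one (show 0 < r by linarith)
  ext t
  simp only [mem_ofPred_eq, mem_insert_iff, mem_singleton_iff, cubic_eq_mul_two_mul_sub_one_mul,
    mul_eq_zero, hp, false_or, mul_sq_sub_mul_add_one_eq_zero_iff hr, mem_Ioo]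
  constructor
  · rintro ⟨-, h | h⟩
    · exact Or.inl (by linarith)
    · exact Or.inr h
  · rintro (rfl | h)
    · exact ⟨by norm_num, Or.inl (by ring)⟩
    · refine ⟨?_, Or.inr h⟩
      rcases h with rfl | rfl <;> constructor <;> linarith

theorem stmt_7 (r p q : ℕ) (hr : 5 ≤ r) (hp : 1 ≤ p) (hq : q = p) :
    ({t : ℝ | t ∈ Set.Ioo (0 : ℝ) 1 ∧
        (r : ℝ) * (p + q) * t ^ 3 + ((q : ℝ) - p - r * (q + 2 * p)) * t ^ 2
          + (2 + r) * p * t - p = 0}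
      = {1 / 2, 1 / 2 - 1 / 2 * Real.sqrt (((r : ℝ) - 4) / r),
          1 / 2 + 1 / 2 * Real.sqrt (((r : ℝ) - 4) / r)})
    ∧ (1 / 2 - 1 / 2 * Real.sqrt (((r : ℝ) - 4) / r) ∈ Set.Ioo (0 : ℝ) 1)
    ∧ (1 / 2 + 1 / 2 * Real.sqrt (((r : ℝ) - 4) / r) ∈ Set.Ioo (0 : ℝ) 1)
    ∧ (1 / 2 - 1 / 2 * Real.sqrt (((r : ℝ) - 4) / r)
        ≠ 1 / 2 + 1 / 2 * Real.sqrt (((r : ℝ) - 4) / r))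
    ∧ (1 / 2 - 1 / 2 * Real.sqrt (((r : ℝ) - 4) / r) ≠ 1 / 2)
    ∧ (1 / 2 + 1 / 2 * Real.sqrt (((r : ℝ) - 4) / r) ≠ 1 / 2) := by
  subst q
  have hrR : (5 : ℝ) ≤ r := by exact_mod_cast hr
  have hp0 : (p : ℝ) ≠ 0 := Nat.cast_ne_zero.mpr (by omega)
  have hs0 := sqrt_sub_four_div_pos (show (4 : ℝ) < r by linarith)
  have hs1 := sqrt_sub_four_div_lt_one (show (0 : ℝ) < r by linarith)
  refine ⟨setOf_mem_Ioo_cubic_eq_zero (by linarith) hp0, ⟨?_, ?_⟩, ⟨?_, ?_⟩, ?_, ?_, ?_⟩ <;>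
    linarith
end

section
/- Let r ≥ 3 and p, q ≥ 1 be integers with p ≠ q, and suppose that (r⁴ − 4r³ + 24r² − 40r − 8)·p·q + 4(1−r)³·(p² + q²) > 0. Then the polynomial P(t) = r(p+q)t³ + (q − p − r(q+2p))t² + (2+r)p·t − p has three distinct roots in (0,1): there exist t₁, t₂, t₃ with 0 < t₁ < t₂ < t₃ < 1 and P(t₁) = P(t₂) = P(t₃) = 0. -/
/-!
With `S = b² - 3ac` and `T = 2b³ - 9abc + 27a²d`, the discriminant of `at³ + bt² + ct + d`
satisfies `27a²·Δ = 4S³ - T²`, and at the critical points `(-b ∓ √S)/(3a)` the cubic takes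
the values `(T ± 2√S·S)/(27a²)`. So `Δ > 0` makes the local maximum positive and the local
minimum negative. For the polynomial `P` of the theorem, `Δ = pq·E` where `E` is the quantity
assumed positive; the signs of the coefficients place both critical points in `(0, 1)`, and
`P(0) = -p < 0 < P(1) = q`, so the intermediate value theorem gives one root in each of the
three monotonicity intervals.
-/

theorem exists_three_zeros_of_sign_changes {f : ℝ → ℝ} {l x y u : ℝ}
    (hf : ContinuousOn f (Set.Icc l u)) (hlx : l ≤ x) (hxy : x ≤ y) (hyu : y ≤ u)
    (hl : f l < 0) (hx : 0 < f x) (hy : f y < 0) (hu : 0 < f u) :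
    ∃ t₁ t₂ t₃ : ℝ, l < t₁ ∧ t₁ < t₂ ∧ t₂ < t₃ ∧ t₃ < u ∧
      f t₁ = 0 ∧ f t₂ = 0 ∧ f t₃ = 0 := by
  obtain ⟨t₁, ⟨hlt₁, ht₁x⟩, h₁⟩ :=
    intermediate_value_Ioo hlx (hf.mono (Set.Icc_subset_Icc le_rfl (hxy.trans hyu))) ⟨hl, hx⟩
  obtain ⟨t₂, ⟨hxt₂, ht₂y⟩, h₂⟩ :=
    intermediate_value_Ioo' hxy (hf.mono (Set.Icc_subset_Icc hlx hyu)) ⟨hy, hx⟩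
  obtain ⟨t₃, ⟨hyt₃, ht₃u⟩, h₃⟩ :=
    intermediate_value_Ioo hyu (hf.mono (Set.Icc_subset_Icc (hlx.trans hxy) le_rfl)) ⟨hy, hu⟩
  exact ⟨t₁, t₂, t₃, hlt₁, ht₁x.trans hxt₂, ht₂y.trans hyt₃, ht₃u, h₁, h₂, h₃⟩

namespace Cubic

variable (P : Cubic ℝ)

theorem eval_toPoly (t : ℝ) : P.toPoly.eval t = P.a * t ^ 3 + P.b * t ^ 2 + P.c * t + P.d := by
  simp [toPoly]

theorem a_sq_mul_discr :
    27 * P.a ^ 2 * P.discr = 4 * (P.b ^ 2 - 3 * P.a * P.c) ^ 3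
      - (2 * P.b ^ 3 - 9 * P.a * P.b * P.c + 27 * P.a ^ 2 * P.d) ^ 2 := by
  simp only [discr]; ring

theorem eval_neg_b_sub_div {s : ℝ} (ha : P.a ≠ 0) (hs : s ^ 2 = P.b ^ 2 - 3 * P.a * P.c) :
    P.toPoly.eval ((-P.b - s) / (3 * P.a)) =
      (2 * P.b ^ 3 - 9 * P.a * P.b * P.c + 27 * P.a ^ 2 * P.d
        + 2 * s * (P.b ^ 2 - 3 * P.a * P.c)) / (27 * P.a ^ 2) := by
  rw [eval_toPoly]
  field_simp
  linear_combination (-27 * s) * hs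

theorem exists_three_roots_Ioo_zero_one (ha : 0 < P.a) (hb : P.b < 0) (hc : 0 < P.c)
    (hd : P.d < 0) (hb₁ : 0 < 3 * P.a + P.b) (hc₁ : 0 < 3 * P.a + 2 * P.b + P.c)
    (hd₁ : 0 < P.a + P.b + P.c + P.d) (hdiscr : 0 < P.discr) :
    ∃ t₁ t₂ t₃ : ℝ, 0 < t₁ ∧ t₁ < t₂ ∧ t₂ < t₃ ∧ t₃ < 1 ∧
      P.toPoly.eval t₁ = 0 ∧ P.toPoly.eval t₂ = 0 ∧ P.toPoly.eval t₃ = 0 := by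
  set S := P.b ^ 2 - 3 * P.a * P.c
  set T := 2 * P.b ^ 3 - 9 * P.a * P.b * P.c + 27 * P.a ^ 2 * P.d
  have hTS : T ^ 2 < 4 * S ^ 3 := by
    have : 0 < 27 * P.a ^ 2 * P.discr := mul_pos (by positivity) hdiscr
    linarith [P.a_sq_mul_discr]
  have hS : 0 < S := by nlinarith [sq_nonneg T, sq_nonneg S]
  obtain ⟨s, hs, hsS⟩ : ∃ s, 0 < s ∧ s ^ 2 = S := ⟨√S, Real.sqrt_pos.2 hS, Real.sq_sqrt hS.le⟩
  have hsb : s < -P.b := by nlinarith [mul_pos ha hc]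
  have hs1 : s < 3 * P.a + P.b := by nlinarith [mul_pos ha hc₁]
  have hT : -(2 * s * S) < T ∧ T < 2 * s * S :=
    abs_lt_of_sq_lt_sq' (by linear_combination hTS - (4 * S ^ 2) * hsS) (by positivity)
  have hmax := P.eval_neg_b_sub_div ha.ne' hsS
  have hmin := P.eval_neg_b_sub_div (s := -s) ha.ne' (by rw [neg_sq, hsS])
  rw [sub_neg_eq_add] at hmin
  refine exists_three_zeros_of_sign_changes (x := (-P.b - s) / (3 * P.a))
    (y := (-P.b + s) / (3 * P.a)) P.toPoly.continuous.continuousOn ?_ ?_ ?_ ?_ ?_ ?_ ?_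
  · exact div_nonneg (by linarith) (by positivity)
  · gcongr; linarith
  · rw [div_le_one (by positivity)]; linarith
  · simpa [eval_toPoly] using hd
  · rw [hmax]; exact div_pos (by linarith [hT.1]) (by positivity)
  · rw [hmin]; exact div_neg_of_neg_of_pos (by linarith [hT.2]) (by positivity)
  · simpa [eval_toPoly] using hd₁

end Cubic

def cliffordCubic (r p q : ℝ) : Cubic ℝ :=
  ⟨r * (p + q), q - p - r * (q + 2 * p), (2 + r) * p, -p⟩

theorem cliffordCubic_discr (r p q : ℝ) :
    (cliffordCubic r p q).discr =
      p * q * ((r ^ 4 - 4 * r ^ 3 + 24 * r ^ 2 - 40 * r - 8) * p * q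
        + 4 * (1 - r) ^ 3 * (p ^ 2 + q ^ 2)) := by
  simp only [cliffordCubic, Cubic.discr]; ring

theorem stmt_10_general (r p q : ℕ) (hr : 3 ≤ r) (hp : 1 ≤ p) (hq : 1 ≤ q)
    (hdisc : ((r : ℝ) ^ 4 - 4 * r ^ 3 + 24 * r ^ 2 - 40 * r - 8) * p * q
        + 4 * (1 - (r : ℝ)) ^ 3 * ((p : ℝ) ^ 2 + (q : ℝ) ^ 2) > 0) :
    ∃ t₁ t₂ t₃ : ℝ, 0 < t₁ ∧ t₁ < t₂ ∧ t₂ < t₃ ∧ t₃ < 1 ∧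
      ((r : ℝ) * (p + q) * t₁ ^ 3 + ((q : ℝ) - p - r * (q + 2 * p)) * t₁ ^ 2
        + (2 + r) * p * t₁ - p = 0) ∧
      ((r : ℝ) * (p + q) * t₂ ^ 3 + ((q : ℝ) - p - r * (q + 2 * p)) * t₂ ^ 2
        + (2 + r) * p * t₂ - p = 0) ∧
      ((r : ℝ) * (p + q) * t₃ ^ 3 + ((q : ℝ) - p - r * (q + 2 * p)) * t₃ ^ 2
        + (2 + r) * p * t₃ - p = 0) := by
  have hr : (3 : ℝ) ≤ r := by exact_mod_cast hr
  have hp : (1 : ℝ) ≤ p := by exact_mod_cast hp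
  have hq : (1 : ℝ) ≤ q := by exact_mod_cast hq
  obtain ⟨t₁, t₂, t₃, h₀₁, h₁₂, h₂₃, h₃₁, e₁, e₂, e₃⟩ :=
    (cliffordCubic r p q).exists_three_roots_Ioo_zero_one
      (by simp only [cliffordCubic]; positivity) (by simp only [cliffordCubic]; nlinarith)
      (by simp only [cliffordCubic]; positivity) (by simp only [cliffordCubic]; linarith)
      (by simp only [cliffordCubic]; nlinarith) (by simp only [cliffordCubic]; nlinarith)
      (by simp only [cliffordCubic]; linarith) (by rw [cliffordCubic_discr]; positivity)
  simp only [Cubic.eval_toPoly, cliffordCubic] at e₁ e₂ e₃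
  exact ⟨t₁, t₂, t₃, h₀₁, h₁₂, h₂₃, h₃₁, by linear_combination e₁, by linear_combination e₂,
    by linear_combination e₃⟩

theorem stmt_10 (r p q : ℕ) (hr : 3 ≤ r) (hp : 1 ≤ p) (hq : 1 ≤ q) (hpq : p ≠ q)
    (hdisc : ((r : ℝ) ^ 4 - 4 * r ^ 3 + 24 * r ^ 2 - 40 * r - 8) * p * q
        + 4 * (1 - (r : ℝ)) ^ 3 * ((p : ℝ) ^ 2 + (q : ℝ) ^ 2) > 0) :
    ∃ t₁ t₂ t₃ : ℝ, 0 < t₁ ∧ t₁ < t₂ ∧ t₂ < t₃ ∧ t₃ < 1 ∧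
      ((r : ℝ) * (p + q) * t₁ ^ 3 + ((q : ℝ) - p - r * (q + 2 * p)) * t₁ ^ 2
        + (2 + r) * p * t₁ - p = 0) ∧
      ((r : ℝ) * (p + q) * t₂ ^ 3 + ((q : ℝ) - p - r * (q + 2 * p)) * t₂ ^ 2
        + (2 + r) * p * t₂ - p = 0) ∧
      ((r : ℝ) * (p + q) * t₃ ^ 3 + ((q : ℝ) - p - r * (q + 2 * p)) * t₃ ^ 2
        + (2 + r) * p * t₃ - p = 0) :=
  stmt_10_general r p q hr hp hq hdisc
end
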